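/- Let R(θ) be the 2×2 real rotation matrix with first row (cos θ, sin θ) and second row (−sin θ, cos θ). For 0 ≤ p ≤ 1/2 and θ₁, θ₂ ∈ [0,π], let ψ₊ = (R(θ₁)⊗R(θ₂))(√(1−p)|0,0⟩ + √p|1,1⟩) and ψ₋ = (R(θ₁)⊗R(θ₂))(√(1−p)|0,0⟩ − √p|1,1⟩). Then the two eigenvalues of T_{ψ₊} have equal non-zero absolute value if and only if p > 0 and sin²(θ₂−θ₁) ≤ 4/(2 + (p(1−p))^{−1/2}); and the two eigenvalues of T_{ψ₋} have equal non-zero absolute value if and only if either p = 1/2, or sin(θ₂−θ₁) = 0 and 0 < p < 1. -/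

import Mathlib

open scoped BigOperators
open Matrix Polynomial

noncomputable section

def Tmat (ψ : Fin 2 × Fin 2 → ℂ) : Matrix (Fin 2) (Fin 2) ℂ :=
  !![star (ψ (0, 1)), star (ψ (1, 1)); -star (ψ (0, 0)), -star (ψ (1, 0))]

def Rrot (θ : ℝ) : Matrix (Fin 2) (Fin 2) ℝ :=
  !![Real.cos θ, Real.sin θ; -Real.sin θ, Real.cos θ]

/-- The real two-qubit state `(R(θ₁)⊗R(θ₂))(√(1−p)|0,0⟩ + ε√p|1,1⟩)` with `ε = ±1`. -/
def psiReal (p θ₁ θ₂ ε : ℝ) : Fin 2 × Fin 2 → ℂ :=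
  fun q => ((Real.sqrt (1 - p) * Rrot θ₁ q.1 0 * Rrot θ₂ q.2 0 +
    ε * Real.sqrt p * Rrot θ₁ q.1 1 * Rrot θ₂ q.2 1 : ℝ) : ℂ)

def EqualNonzeroAbsEigs (M : Matrix (Fin 2) (Fin 2) ℂ) : Prop :=
  ∃ μ₁ μ₂ : ℂ, M.charpoly = (X - C μ₁) * (X - C μ₂) ∧
    ‖μ₁‖ = ‖μ₂‖ ∧ μ₁ ≠ 0 ∧ μ₂ ≠ 0

/-!
If `A` is the coefficient matrix of `ψ`, then `T_ψ = J Aᴴ` with `J = !![0, 1; -1, 0]`. For the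
rotated state, `A = R(θ₁) diag(√(1-p), ε√p) R(θ₂)ᵀ` is real, so `T_ψ` is real with determinant
`d = ε√(1-p)√p` (rotations have determinant one) and trace `t = -(√(1-p) + ε√p) sin(θ₂-θ₁)`.
The roots of a real quadratic `X² - tX + d` have equal non-zero modulus iff `d ≠ 0` and either
`t = 0` (roots `±r`) or `t² ≤ 4d` (complex-conjugate roots). For `ε = 1` we have
`t² = (1 + 2√(p(1-p))) sin²(θ₂-θ₁)`, which turns `t² ≤ 4d` into the stated bound; for `ε = -1`
the determinant is negative, so `t = 0` is forced, i.e. `p = 1/2` or `sin(θ₂-θ₁) = 0`.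
-/

open scoped ComplexConjugate

theorem X_sq_sub_C_mul_X_add_C_eq_iff {R : Type*} [CommRing R] (a b μ ν : R) :
    X ^ 2 - C a * X + C b = (X - C μ) * (X - C ν) ↔ μ + ν = a ∧ μ * ν = b := by
  have hprod : (X - C μ) * (X - C ν) = X ^ 2 - C (μ + ν) * X + C (μ * ν) := by
    rw [C_add, C_mul]; ring
  rw [hprod]
  refine ⟨fun h => ⟨?_, ?_⟩, fun ⟨hs, hp⟩ => by rw [hs, hp]⟩
  · have h1 : -a = -(μ + ν) := by simpa using congrArg (coeff · 1) h
    exact (neg_inj.1 h1).symm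
  · simpa using (congrArg (coeff · 0) h).symm

theorem eq_zero_or_sq_le_four_mul_of_norm_eq {μ ν : ℂ} {t d : ℝ} (ht : μ + ν = t)
    (hd : μ * ν = d) (hn : ‖μ‖ = ‖ν‖) : t = 0 ∨ t ^ 2 ≤ 4 * d := by
  have hre : μ.re + ν.re = t := by simpa using congrArg Complex.re ht
  have him : μ.im + ν.im = 0 := by simpa using congrArg Complex.im ht
  have hdre : μ.re * ν.re - μ.im * ν.im = d := by simpa using congrArg Complex.re hd
  have hsq : μ.re ^ 2 + μ.im ^ 2 = ν.re ^ 2 + ν.im ^ 2 := by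
    have := congrArg (· ^ 2) hn
    simp only [Complex.sq_norm, Complex.normSq_apply] at this
    linear_combination this
  have : (μ.re - ν.re) * (μ.re + ν.re) = 0 := by
    linear_combination hsq - (μ.im - ν.im) * him
  -- so either `ν = conj μ`, or `t = 0`
  rcases mul_eq_zero.mp this with h | h
  · right
    have : 4 * d - t ^ 2 = 4 * μ.im ^ 2 := by
      rw [← hre, ← hdre]
      linear_combination (-(μ.re - ν.re)) * h + (-4 * μ.im) * him
    nlinarith [sq_nonneg μ.im]
  · left
    linarith

theorem exists_sum_prod_norm_eq_iff (t d : ℝ) :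
    (∃ μ ν : ℂ, μ + ν = t ∧ μ * ν = d ∧ ‖μ‖ = ‖ν‖ ∧ μ ≠ 0 ∧ ν ≠ 0) ↔
      d ≠ 0 ∧ (t = 0 ∨ t ^ 2 ≤ 4 * d) := by
  constructor
  · rintro ⟨μ, ν, ht, hd, hn, hμ, hν⟩
    refine ⟨fun h0 => mul_ne_zero hμ hν (by rw [hd, h0, Complex.ofReal_zero]), ?_⟩
    exact eq_zero_or_sq_le_four_mul_of_norm_eq ht hd hn
  rintro ⟨hd, ht⟩
  suffices ∃ μ ν : ℂ, μ + ν = t ∧ μ * ν = d ∧ ‖μ‖ = ‖ν‖ by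
    obtain ⟨μ, ν, hs, hp, hn⟩ := this
    have hμν : μ * ν ≠ 0 := by rw [hp]; exact_mod_cast hd
    exact ⟨μ, ν, hs, hp, hn, left_ne_zero_of_mul hμν, right_ne_zero_of_mul hμν⟩
  by_cases h4 : t ^ 2 ≤ 4 * d
  · obtain ⟨b, hb⟩ : ∃ b : ℝ, b ^ 2 = d - t ^ 2 / 4 :=
      ⟨√(d - t ^ 2 / 4), Real.sq_sqrt (by linarith)⟩
    let μ : ℂ := ⟨t / 2, b⟩
    refine ⟨μ, conj μ, ?_, ?_, (Complex.norm_conj μ).symm⟩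
    · rw [Complex.add_conj, show μ.re = t / 2 from rfl]
      push_cast
      ring
    · rw [Complex.mul_conj, Complex.normSq_mk]
      norm_cast
      linear_combination hb
  · have ht0 : t = 0 := ht.resolve_right h4
    have hd0 : d < 0 := by nlinarith
    refine ⟨√(-d), -√(-d), by simp [ht0], ?_, (norm_neg _).symm⟩
    rw [mul_neg, ← Complex.ofReal_mul, Real.mul_self_sqrt (by linarith)]
    push_cast
    ring

theorem equalNonzeroAbsEigs_iff_of_charpoly {M : Matrix (Fin 2) (Fin 2) ℂ} {t d : ℝ}
    (h : M.charpoly = X ^ 2 - C (t : ℂ) * X + C (d : ℂ)) :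
    EqualNonzeroAbsEigs M ↔ d ≠ 0 ∧ (t = 0 ∨ t ^ 2 ≤ 4 * d) := by
  simp only [EqualNonzeroAbsEigs, h, X_sq_sub_C_mul_X_add_C_eq_iff, and_assoc]
  exact exists_sum_prod_norm_eq_iff t d

theorem charpoly_Tmat_ofReal (A : Matrix (Fin 2) (Fin 2) ℝ) :
    (Tmat fun q => (A q.1 q.2 : ℂ)).charpoly =
      X ^ 2 - C ((A 0 1 - A 1 0 : ℝ) : ℂ) * X + C (A.det : ℂ) := by
  have htrace : (Tmat fun q => (A q.1 q.2 : ℂ)).trace = ((A 0 1 - A 1 0 : ℝ) : ℂ) := by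
    simp [Tmat, trace_fin_two, sub_eq_add_neg]
  have hdet : (Tmat fun q => (A q.1 q.2 : ℂ)).det = (A.det : ℂ) := by
    simp only [Tmat, det_fin_two, det_fin_two A, of_apply, cons_val', cons_val_zero, cons_val_one,
      cons_val_fin_one, RCLike.star_def, Complex.conj_ofReal]
    push_cast
    ring
  rw [charpoly_fin_two, htrace, hdet]

theorem det_Rrot (θ : ℝ) : (Rrot θ).det = 1 := by
  simp [Rrot, det_fin_two, ← sq, Real.cos_sq_add_sin_sq]

theorem psiReal_eq_rotated_diagonal (p θ₁ θ₂ ε : ℝ) :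
    psiReal p θ₁ θ₂ ε = fun q =>
      ((Rrot θ₁ * diagonal ![√(1 - p), ε * √p] * (Rrot θ₂)ᵀ) q.1 q.2 : ℂ) := by
  funext q
  simp only [psiReal, mul_apply, Fin.sum_univ_two, transpose_apply, diagonal_apply_eq,
    diagonal_apply_ne _ zero_ne_one, diagonal_apply_ne _ one_ne_zero, cons_val_zero, cons_val_one,
    cons_val_fin_one]
  push_cast
  ring

theorem det_rotated_diagonal (θ₁ θ₂ a b : ℝ) :
    (Rrot θ₁ * diagonal ![a, b] * (Rrot θ₂)ᵀ).det = a * b := by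
  simp [det_Rrot]

theorem rotated_diagonal_apply_zero_one_sub_apply_one_zero (θ₁ θ₂ a b : ℝ) :
    (Rrot θ₁ * diagonal ![a, b] * (Rrot θ₂)ᵀ) 0 1 - (Rrot θ₁ * diagonal ![a, b] * (Rrot θ₂)ᵀ) 1 0
      = -(a + b) * Real.sin (θ₂ - θ₁) := by
  simp only [Rrot, mul_apply, Fin.sum_univ_two, transpose_apply, diagonal_apply_eq,
    diagonal_apply_ne _ zero_ne_one, diagonal_apply_ne _ one_ne_zero, of_apply, cons_val',
    cons_val_zero, cons_val_one, cons_val_fin_one, Real.sin_sub]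
  ring

theorem charpoly_Tmat_psiReal (p θ₁ θ₂ ε : ℝ) :
    (Tmat (psiReal p θ₁ θ₂ ε)).charpoly =
      X ^ 2 - C ((-(√(1 - p) + ε * √p) * Real.sin (θ₂ - θ₁) : ℝ) : ℂ) * X
        + C ((√(1 - p) * (ε * √p) : ℝ) : ℂ) := by
  rw [psiReal_eq_rotated_diagonal, charpoly_Tmat_ofReal,
    rotated_diagonal_apply_zero_one_sub_apply_one_zero, det_rotated_diagonal]

theorem sq_le_four_div_two_add_inv_iff {w Δ : ℝ} (hw : 0 < w) :
    Δ ^ 2 ≤ 4 / (2 + w⁻¹) ↔ (1 + 2 * w) * Δ ^ 2 ≤ 4 * w := by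
  rw [le_div_iff₀ (by positivity), ← mul_le_mul_iff_of_pos_left hw]
  field_simp
  ring_nf

theorem equalNonzeroAbsEigs_Tmat_psiReal_one_iff {p : ℝ} (θ₁ θ₂ : ℝ) (hp : p < 1) :
    EqualNonzeroAbsEigs (Tmat (psiReal p θ₁ θ₂ 1)) ↔
      0 < p ∧ Real.sin (θ₂ - θ₁) ^ 2 ≤ 4 / (2 + (√(p * (1 - p)))⁻¹) := by
  rw [equalNonzeroAbsEigs_iff_of_charpoly (charpoly_Tmat_psiReal p θ₁ θ₂ 1), one_mul,
    Real.sqrt_mul' p (by linarith)]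
  set Δ := Real.sin (θ₂ - θ₁)
  by_cases hp0 : 0 < p
  swap
  · simp [hp0, Real.sqrt_eq_zero'.2 (not_lt.1 hp0)]
  have hv : 0 < √p := Real.sqrt_pos.2 hp0
  have hw : 0 < √p * √(1 - p) := by positivity
  have ht : (-(√(1 - p) + √p) * Δ) ^ 2 = (1 + 2 * (√p * √(1 - p))) * Δ ^ 2 := by
    linear_combination (Δ ^ 2) * (Real.sq_sqrt (sub_nonneg.2 hp.le) + Real.sq_sqrt hp0.le)
  rw [sq_le_four_div_two_add_inv_iff hw, ← ht, mul_comm (√(1 - p))]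
  simp only [ne_eq, hw.ne', not_false_eq_true, hp0, true_and]
  refine ⟨fun h => h.elim (fun h0 => by rw [h0]; linarith) id, Or.inr⟩

theorem equalNonzeroAbsEigs_Tmat_psiReal_neg_one_iff (p θ₁ θ₂ : ℝ) :
    EqualNonzeroAbsEigs (Tmat (psiReal p θ₁ θ₂ (-1))) ↔
      p = 1 / 2 ∨ Real.sin (θ₂ - θ₁) = 0 ∧ 0 < p ∧ p < 1 := by
  rw [equalNonzeroAbsEigs_iff_of_charpoly (charpoly_Tmat_psiReal p θ₁ θ₂ (-1))]
  set Δ := Real.sin (θ₂ - θ₁)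
  have hdet : √(1 - p) * (-1 * √p) ≠ 0 ↔ 0 < p ∧ p < 1 := by
    simp [Real.sqrt_ne_zero', and_comm]
  have htr (hp : 0 < p ∧ p < 1) : -(√(1 - p) + -1 * √p) * Δ = 0 ↔ p = 1 / 2 ∨ Δ = 0 := by
    have : √(1 - p) = √p ↔ p = 1 / 2 := by
      rw [Real.sqrt_inj (by linarith) hp.1.le]
      constructor <;> intro h <;> linarith
    rw [mul_eq_zero, neg_eq_zero, neg_one_mul, ← sub_eq_add_neg, sub_eq_zero, this]
  constructor
  · rintro ⟨hd, ht⟩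
    have hp := hdet.1 hd
    have ht0 := ht.resolve_right fun h => by
      nlinarith [Real.sqrt_pos.2 hp.1, Real.sqrt_pos.2 (sub_pos.2 hp.2)]
    rcases (htr hp).1 ht0 with h | h
    · exact Or.inl h
    · exact Or.inr ⟨h, hp⟩
  · intro h
    have hp : 0 < p ∧ p < 1 := by
      rcases h with rfl | ⟨-, hp⟩
      · norm_num
      · exact hp
    exact ⟨hdet.2 hp, Or.inl ((htr hp).2 (h.imp id And.left))⟩

theorem real_state_phase_diagram_general (p θ₁ θ₂ : ℝ)
    (hp : p ≤ 1 / 2) :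
    (EqualNonzeroAbsEigs (Tmat (psiReal p θ₁ θ₂ 1)) ↔
      (0 < p ∧ Real.sin (θ₂ - θ₁) ^ 2 ≤ 4 / (2 + (Real.sqrt (p * (1 - p)))⁻¹))) ∧
    (EqualNonzeroAbsEigs (Tmat (psiReal p θ₁ θ₂ (-1))) ↔
      (p = 1 / 2 ∨ (Real.sin (θ₂ - θ₁) = 0 ∧ 0 < p ∧ p < 1))) :=
  ⟨equalNonzeroAbsEigs_Tmat_psiReal_one_iff θ₁ θ₂ (by linarith),
    equalNonzeroAbsEigs_Tmat_psiReal_neg_one_iff p θ₁ θ₂⟩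

/-- **Phase diagram for real forbidden states** (as stated in the introduction of the
paper). The eigenvalues of `T_{ψ₊}` have equal non-zero magnitude iff `p > 0` and
`sin²(θ₂−θ₁) ≤ 4/(2+(p(1−p))^{−1/2})`; the eigenvalues of `T_{ψ₋}` have equal non-zero
magnitude iff `p = 1/2`, or `sin(θ₂−θ₁) = 0` and `0 < p < 1`. -/
theorem real_state_phase_diagram (p θ₁ θ₂ : ℝ)
    (hp0 : 0 ≤ p) (hp : p ≤ 1 / 2)
    (hθ₁ : θ₁ ∈ Set.Icc 0 Real.pi) (hθ₂ : θ₂ ∈ Set.Icc 0 Real.pi) :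
    (EqualNonzeroAbsEigs (Tmat (psiReal p θ₁ θ₂ 1)) ↔
      (0 < p ∧ Real.sin (θ₂ - θ₁) ^ 2 ≤ 4 / (2 + (Real.sqrt (p * (1 - p)))⁻¹))) ∧
    (EqualNonzeroAbsEigs (Tmat (psiReal p θ₁ θ₂ (-1))) ↔
      (p = 1 / 2 ∨ (Real.sin (θ₂ - θ₁) = 0 ∧ 0 < p ∧ p < 1))) :=
  real_state_phase_diagram_general p θ₁ θ₂ hp
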